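/- Let n and k be integers with 1 ≤ k < n and k even, and let w : (0,∞) → ℝ be measurable satisfying ∫₀^∞ s^{n−k−1} |w(s)| ds < ∞, ∫₁^∞ s^{β+n−k−1} |w(s)| ds < ∞ for some β > k, and the cancellation conditions ∫₀^∞ s^{j+n−k−1} w(s) ds = 0 for j = 0, 2, 4, …, k. Define w̃(s) = s^{(n−k)/2 − 1} w(√s) and λ(s) = (1/(s Γ(k/2 + 1))) ∫₀^{s²} (s² − r)^{k/2} w̃(r) dr for s > 0. Then λ is integrable on (0,∞) and ∫₀^∞ λ(s) ds = (2(−1)^{1+k/2} / (k/2)!) ∫₀^∞ s^{n−1} w(s) log s ds. -/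

import Mathlib

/-!
Write `k = 2m` and `φ(t) = t^(n-k-1) w(t)`. The substitution `r = t²` turns `λ` into
`(2/m!) s⁻¹ ∫₀ˢ (s² - t²)^m φ(t) dt`. Expanding `(s² - t²)^m` binomially and using the
vanishing moments `∫₀^∞ t^(2i) φ = 0` to trade each `∫₀ˢ` for `-∫ₛ^∞`, `λ` becomes a
combination of `s^(2j-1) ∫ₛ^∞ t^(2(m-j)) φ(t) dt`. Fubini over `{s < t}` makes the terms with
`j ≥ 1` multiples of `∫₀^∞ t^(2m) φ = 0`, while the term `j = 0` gives
`∫₀^∞ log t · t^(2m) φ(t) dt` because `∫₁ᵗ ds/s = log t`; below `s = 1` the kernel `1/s` is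
only integrable after replacing `∫ₛ^∞` by `-∫₀ˢ` once more. The decay assumption with `β > k`
makes all the weights `t^(2i)` and `t^k log t` integrable against `φ`.
-/

open MeasureTheory Set Real

section HalfPlane

variable {μ ν : Measure ℝ} {g ψ : ℝ → ℝ}

noncomputable def mulOnLT (g ψ : ℝ → ℝ) : ℝ × ℝ → ℝ :=
  {p : ℝ × ℝ | p.1 < p.2}.indicator fun p => g p.1 * ψ p.2

lemma mulOnLT_apply_eq_indicator_Ioi (s t : ℝ) :
    mulOnLT g ψ (s, t) = (Ioi s).indicator (fun t => g s * ψ t) t := by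
  simp only [mulOnLT, indicator_apply, mem_ofPred_eq, mem_Ioi]

lemma mulOnLT_apply_eq_indicator_Iio (s t : ℝ) :
    mulOnLT g ψ (s, t) = (Iio t).indicator (fun s => g s * ψ t) s := by
  simp only [mulOnLT, indicator_apply, mem_ofPred_eq, mem_Iio]

lemma aestronglyMeasurable_mulOnLT (hg : AEStronglyMeasurable g μ)
    (hψ : AEStronglyMeasurable ψ ν) : AEStronglyMeasurable (mulOnLT g ψ) (μ.prod ν) :=
  (hg.comp_fst.mul hψ.comp_snd).indicator (measurableSet_lt measurable_fst measurable_snd)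

lemma integrable_mulOnLT_of_integrable_integral_Iio [SFinite μ] [SFinite ν]
    (hg : AEStronglyMeasurable g μ) (hψ : AEStronglyMeasurable ψ ν)
    (hg_int : ∀ᵐ t ∂ν, IntegrableOn g (Iio t) μ)
    (h : Integrable (fun t => (∫ s in Iio t, |g s| ∂μ) * |ψ t|) ν) :
    Integrable (mulOnLT g ψ) (μ.prod ν) := by
  refine (integrable_prod_iff' (aestronglyMeasurable_mulOnLT hg hψ)).2 ⟨?_, ?_⟩
  · filter_upwards [hg_int] with t ht
    simp_rw [mulOnLT_apply_eq_indicator_Iio]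
    exact IntegrableOn.integrable_indicator (Integrable.mul_const ht _) measurableSet_Iio
  · refine h.congr (ae_of_all _ fun t => ?_)
    simp_rw [mulOnLT_apply_eq_indicator_Iio, norm_indicator_eq_indicator_norm,
      integral_indicator measurableSet_Iio, norm_mul, Real.norm_eq_abs, integral_mul_const]

lemma integrable_mulOnLT_of_integrable_integral_Ioi [SFinite ν]
    (hg : AEStronglyMeasurable g μ) (hψ : AEStronglyMeasurable ψ ν)
    (hψ_int : ∀ᵐ s ∂μ, IntegrableOn ψ (Ioi s) ν)
    (h : Integrable (fun s => |g s| * ∫ t in Ioi s, |ψ t| ∂ν) μ) :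
    Integrable (mulOnLT g ψ) (μ.prod ν) := by
  refine (integrable_prod_iff (aestronglyMeasurable_mulOnLT hg hψ)).2 ⟨?_, ?_⟩
  · filter_upwards [hψ_int] with s hs
    simp_rw [mulOnLT_apply_eq_indicator_Ioi]
    exact IntegrableOn.integrable_indicator (Integrable.const_mul hs _) measurableSet_Ioi
  · refine h.congr (ae_of_all _ fun s => ?_)
    simp_rw [mulOnLT_apply_eq_indicator_Ioi, norm_indicator_eq_indicator_norm,
      integral_indicator measurableSet_Ioi, norm_mul, Real.norm_eq_abs, integral_const_mul]

lemma integral_mulOnLT_left (s : ℝ) :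
    ∫ t, mulOnLT g ψ (s, t) ∂ν = g s * ∫ t in Ioi s, ψ t ∂ν := by
  simp_rw [mulOnLT_apply_eq_indicator_Ioi, integral_indicator measurableSet_Ioi,
    integral_const_mul]

lemma integral_mulOnLT_right (t : ℝ) :
    ∫ s, mulOnLT g ψ (s, t) ∂μ = (∫ s in Iio t, g s ∂μ) * ψ t := by
  simp_rw [mulOnLT_apply_eq_indicator_Iio, integral_indicator measurableSet_Iio,
    integral_mul_const]

lemma MeasureTheory.Integrable.integrable_mul_integral_Ioi [SFinite ν]
    (h : Integrable (mulOnLT g ψ) (μ.prod ν)) :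
    Integrable (fun s => g s * ∫ t in Ioi s, ψ t ∂ν) μ := by
  simpa only [integral_mulOnLT_left] using h.integral_prod_left

lemma MeasureTheory.Integrable.integrable_integral_Iio_mul [SFinite μ] [SFinite ν]
    (h : Integrable (mulOnLT g ψ) (μ.prod ν)) :
    Integrable (fun t => (∫ s in Iio t, g s ∂μ) * ψ t) ν := by
  simpa only [integral_mulOnLT_right] using h.integral_prod_right

lemma MeasureTheory.Integrable.integral_mul_integral_Ioi [SFinite μ] [SFinite ν]
    (h : Integrable (mulOnLT g ψ) (μ.prod ν)) :
    ∫ s, g s * ∫ t in Ioi s, ψ t ∂ν ∂μ = ∫ t, (∫ s in Iio t, g s ∂μ) * ψ t ∂ν := by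
  simp_rw [← integral_mulOnLT_left, ← integral_mulOnLT_right]
  exact integral_integral_swap h

end HalfPlane

lemma restrict_Ioi_restrict_Iio (a t : ℝ) :
    (volume.restrict (Ioi a)).restrict (Iio t) = volume.restrict (Ioo a t) := by
  rw [Measure.restrict_restrict measurableSet_Iio, Iio_inter_Ioi]

theorem integral_mul_integral_Ioi_of_nonneg {a : ℝ} {g ψ : ℝ → ℝ}
    (hg : ContinuousOn g (Ici a)) (hg_nonneg : ∀ s ∈ Ioi a, 0 ≤ g s)
    (hψ : AEStronglyMeasurable ψ (volume.restrict (Ioi a)))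
    (h : IntegrableOn (fun t => (∫ s in Ioo a t, g s) * ψ t) (Ioi a)) :
    IntegrableOn (fun s => g s * ∫ t in Ioi s, ψ t) (Ioi a) ∧
      ∫ s in Ioi a, g s * ∫ t in Ioi s, ψ t = ∫ t in Ioi a, (∫ s in Ioo a t, g s) * ψ t := by
  have hF : Integrable (mulOnLT g ψ)
      ((volume.restrict (Ioi a)).prod (volume.restrict (Ioi a))) := by
    refine integrable_mulOnLT_of_integrable_integral_Iio
      ((hg.mono Ioi_subset_Ici_self).aestronglyMeasurable measurableSet_Ioi) hψ
      (ae_of_all _ fun t => ?_)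
      (IntegrableOn.congr_fun h.norm (fun t ht => ?_) measurableSet_Ioi)
    · rw [IntegrableOn, restrict_Ioi_restrict_Iio]
      exact (hg.mono Icc_subset_Ici_self).integrableOn_Icc.mono_set Ioo_subset_Icc_self
    · have hg_Ioo : ∀ s ∈ Ioo a t, |g s| = g s :=
        fun s hs => abs_of_nonneg (hg_nonneg s hs.1)
      rw [restrict_Ioi_restrict_Iio, setIntegral_congr_fun measurableSet_Ioo hg_Ioo, norm_mul,
        Real.norm_eq_abs, Real.norm_eq_abs, abs_of_nonneg (setIntegral_nonneg measurableSet_Ioo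
          fun s hs => hg_nonneg s hs.1)]
  have hIoi : ∀ s ∈ Ioi a, g s * ∫ t in Ioi s, ψ t ∂volume.restrict (Ioi a) =
      g s * ∫ t in Ioi s, ψ t := fun s hs => by
    rw [Measure.restrict_restrict_of_subset (Ioi_subset_Ioi (le_of_lt hs))]
  have hIio : ∀ t, (∫ s in Iio t, g s ∂volume.restrict (Ioi a)) * ψ t =
      (∫ s in Ioo a t, g s) * ψ t := fun t => by
    rw [restrict_Ioi_restrict_Iio]
  refine ⟨IntegrableOn.congr_fun hF.integrable_mul_integral_Ioi hIoi measurableSet_Ioi, ?_⟩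
  rw [← setIntegral_congr_fun measurableSet_Ioi hIoi, hF.integral_mul_integral_Ioi]
  simp_rw [hIio]

lemma setIntegral_Ioo_pow (a : ℕ) {t : ℝ} (ht : 0 ≤ t) :
    ∫ s in Ioo 0 t, s ^ a = t ^ (a + 1) / (a + 1) := by
  rw [← integral_Ioc_eq_integral_Ioo, ← intervalIntegral.integral_of_le ht, integral_pow]
  simp

theorem integral_pow_mul_integral_Ioi {ψ : ℝ → ℝ} (a : ℕ)
    (hψ : AEStronglyMeasurable ψ (volume.restrict (Ioi 0)))
    (h : IntegrableOn (fun t => t ^ (a + 1) * ψ t) (Ioi 0)) :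
    IntegrableOn (fun s => s ^ a * ∫ t in Ioi s, ψ t) (Ioi 0) ∧
      ∫ s in Ioi 0, s ^ a * ∫ t in Ioi s, ψ t =
        (a + 1 : ℝ)⁻¹ * ∫ t in Ioi 0, t ^ (a + 1) * ψ t := by
  have hG : ∀ t ∈ Ioi (0 : ℝ),
      (∫ s in Ioo 0 t, s ^ a) * ψ t = (a + 1 : ℝ)⁻¹ * (t ^ (a + 1) * ψ t) := fun t ht => by
    rw [setIntegral_Ioo_pow a (le_of_lt ht)]
    ring
  rw [← integral_const_mul, ← setIntegral_congr_fun measurableSet_Ioi hG]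
  exact integral_mul_integral_Ioi_of_nonneg (continuous_pow a).continuousOn
    (fun s hs => pow_nonneg (le_of_lt hs) a) hψ
    (IntegrableOn.congr_fun (h.const_mul _) (fun t ht => (hG t ht).symm) measurableSet_Ioi)

lemma setIntegral_Ioo_one_inv_eq_log {t : ℝ} (ht : 1 ≤ t) : ∫ s in Ioo 1 t, s⁻¹ = log t := by
  rw [← integral_Ioc_eq_integral_Ioo, ← intervalIntegral.integral_of_le ht,
    integral_inv_of_pos one_pos (one_pos.trans_le ht), div_one]

theorem integral_Ioi_one_inv_mul_integral_Ioi {ψ : ℝ → ℝ}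
    (hψ : AEStronglyMeasurable ψ (volume.restrict (Ioi 1)))
    (hlog : IntegrableOn (fun t => log t * ψ t) (Ioi 1)) :
    IntegrableOn (fun s => s⁻¹ * ∫ t in Ioi s, ψ t) (Ioi 1) ∧
      ∫ s in Ioi 1, s⁻¹ * ∫ t in Ioi s, ψ t = ∫ t in Ioi 1, log t * ψ t := by
  have hG : ∀ t ∈ Ioi (1 : ℝ), (∫ s in Ioo 1 t, s⁻¹) * ψ t = log t * ψ t :=
    fun t ht => by rw [setIntegral_Ioo_one_inv_eq_log (le_of_lt ht)]
  rw [← setIntegral_congr_fun measurableSet_Ioi hG]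
  exact integral_mul_integral_Ioi_of_nonneg
    (continuousOn_inv₀.mono fun s hs => (one_pos.trans_le hs).ne')
    (fun s hs => inv_nonneg.2 (zero_le_one.trans (le_of_lt hs))) hψ
    (hlog.congr_fun (fun t ht => (hG t ht).symm) measurableSet_Ioi)

lemma setIntegral_Ioc_inv_eq_neg_log {t : ℝ} (ht : 0 < t) (ht1 : t ≤ 1) :
    ∫ s in Ioc t 1, s⁻¹ = -log t := by
  rw [← intervalIntegral.integral_of_le ht1, integral_inv_of_pos ht one_pos, one_div, log_inv]

lemma restrict_Ioc_restrict_Ioi {a b t : ℝ} (ht : a ≤ t) :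
    (volume.restrict (Ioc a b)).restrict (Ioi t) = volume.restrict (Ioc t b) := by
  rw [Measure.restrict_restrict measurableSet_Ioi, inter_comm, Ioc_inter_Ioi, sup_eq_right.2 ht]

lemma restrict_Ioc_restrict_Iio {a b s : ℝ} (hs : s ≤ b) :
    (volume.restrict (Ioc a b)).restrict (Iio s) = volume.restrict (Ioo a s) := by
  rw [Measure.restrict_restrict measurableSet_Iio]
  congr 1
  ext x
  exact ⟨fun ⟨hxs, hax, _⟩ => ⟨hax, hxs⟩, fun ⟨hax, hxs⟩ => ⟨hxs, hax, hxs.le.trans hs⟩⟩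

theorem integral_Ioc_zero_one_inv_mul_integral_Ioo {ψ : ℝ → ℝ}
    (hψ : AEStronglyMeasurable ψ (volume.restrict (Ioc 0 1)))
    (hlog : IntegrableOn (fun t => log t * ψ t) (Ioc 0 1)) :
    IntegrableOn (fun s => s⁻¹ * ∫ t in Ioo 0 s, ψ t) (Ioc 0 1) ∧
      ∫ s in Ioc 0 1, s⁻¹ * ∫ t in Ioo 0 s, ψ t = -∫ t in Ioc 0 1, log t * ψ t := by
  have hinv : ContinuousOn (fun s : ℝ => s⁻¹) (Ioi 0) :=
    continuousOn_inv₀.mono fun s hs => ne_of_gt hs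
  have hF : Integrable (mulOnLT ψ fun s => s⁻¹)
      ((volume.restrict (Ioc 0 1)).prod (volume.restrict (Ioc 0 1))) := by
    refine integrable_mulOnLT_of_integrable_integral_Ioi hψ
      ((hinv.mono Ioc_subset_Ioi_self).aestronglyMeasurable measurableSet_Ioc) ?_
      (IntegrableOn.congr_fun hlog.norm (fun t ht => ?_) measurableSet_Ioc)
    · filter_upwards [ae_restrict_mem measurableSet_Ioc] with t ht
      rw [IntegrableOn, restrict_Ioc_restrict_Ioi ht.1.le]
      exact ((hinv.mono fun s hs => ht.1.trans_le hs.1).integrableOn_Icc).mono_set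
        Ioc_subset_Icc_self
    · have habs : ∀ s ∈ Ioc t 1, |s⁻¹| = s⁻¹ :=
        fun s hs => abs_of_pos (inv_pos.2 (ht.1.trans hs.1))
      rw [restrict_Ioc_restrict_Ioi ht.1.le, setIntegral_congr_fun measurableSet_Ioc habs,
        setIntegral_Ioc_inv_eq_neg_log ht.1 ht.2, norm_mul, Real.norm_eq_abs, Real.norm_eq_abs,
        abs_of_nonpos (log_nonpos ht.1.le ht.2)]
      ring
  have hIio : ∀ s ∈ Ioc (0 : ℝ) 1, (∫ t in Iio s, ψ t ∂volume.restrict (Ioc 0 1)) * s⁻¹ =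
      s⁻¹ * ∫ t in Ioo 0 s, ψ t := fun s hs => by
    rw [restrict_Ioc_restrict_Iio hs.2, mul_comm]
  have hIoi : ∀ t ∈ Ioc (0 : ℝ) 1, ψ t * ∫ s in Ioi t, s⁻¹ ∂volume.restrict (Ioc 0 1) =
      -(log t * ψ t) := fun t ht => by
    rw [restrict_Ioc_restrict_Ioi ht.1.le, setIntegral_Ioc_inv_eq_neg_log ht.1 ht.2]
    ring
  refine ⟨IntegrableOn.congr_fun hF.integrable_integral_Iio_mul hIio measurableSet_Ioc, ?_⟩
  rw [← setIntegral_congr_fun measurableSet_Ioc hIio, ← hF.integral_mul_integral_Ioi,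
    setIntegral_congr_fun measurableSet_Ioc hIoi, integral_neg]

lemma integral_Ioo_eq_neg_integral_Ioi {ψ : ℝ → ℝ} (hψ : IntegrableOn ψ (Ioi 0))
    (hzero : ∫ t in Ioi 0, ψ t = 0) {s : ℝ} (hs : 0 ≤ s) :
    ∫ t in Ioo 0 s, ψ t = -∫ t in Ioi s, ψ t := by
  rw [← Ioc_union_Ioi_eq_Ioi hs] at hψ hzero
  rw [setIntegral_union Ioc_disjoint_Ioi_same measurableSet_Ioi (hψ.mono_set subset_union_left)
    (hψ.mono_set subset_union_right), integral_Ioc_eq_integral_Ioo] at hzero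
  linarith

theorem integral_inv_mul_integral_Ioi_eq_integral_log_mul {ψ : ℝ → ℝ}
    (hψ : IntegrableOn ψ (Ioi 0)) (hlog : IntegrableOn (fun t => log t * ψ t) (Ioi 0))
    (hzero : ∫ t in Ioi 0, ψ t = 0) :
    IntegrableOn (fun s => s⁻¹ * ∫ t in Ioi s, ψ t) (Ioi 0) ∧
      ∫ s in Ioi 0, s⁻¹ * ∫ t in Ioi s, ψ t = ∫ t in Ioi 0, log t * ψ t := by
  have hsplit : Ioc (0 : ℝ) 1 ∪ Ioi 1 = Ioi 0 := Ioc_union_Ioi_eq_Ioi zero_le_one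
  rw [← hsplit] at hψ hlog ⊢
  obtain ⟨hhead_int, hhead⟩ := integral_Ioc_zero_one_inv_mul_integral_Ioo
    (hψ.mono_set subset_union_left).aestronglyMeasurable (hlog.mono_set subset_union_left)
  obtain ⟨htail_int, htail⟩ := integral_Ioi_one_inv_mul_integral_Ioi
    (hψ.mono_set subset_union_right).aestronglyMeasurable (hlog.mono_set subset_union_right)
  have hhead' : ∀ s ∈ Ioc (0 : ℝ) 1, -(s⁻¹ * ∫ t in Ioo 0 s, ψ t) = s⁻¹ * ∫ t in Ioi s, ψ t :=
    fun s hs => by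
      rw [integral_Ioo_eq_neg_integral_Ioi (hsplit ▸ hψ) (hsplit ▸ hzero) hs.1.le]
      ring
  have hhead_int' := IntegrableOn.congr_fun hhead_int.neg hhead' measurableSet_Ioc
  refine ⟨hhead_int'.union htail_int, ?_⟩
  rw [setIntegral_union Ioc_disjoint_Ioi_same measurableSet_Ioi hhead_int' htail_int,
    setIntegral_union Ioc_disjoint_Ioi_same measurableSet_Ioi (hlog.mono_set subset_union_left)
      (hlog.mono_set subset_union_right), ← setIntegral_congr_fun measurableSet_Ioc hhead',
    integral_neg, hhead, htail, neg_neg]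

lemma integrableOn_Ioi_mul_of_abs_le {f g : ℝ → ℝ} {β C : ℝ} (hf : IntegrableOn f (Ioi 0))
    (hfβ : IntegrableOn (fun t => t ^ β * f t) (Ioi 1)) (hg : Measurable g)
    (hg₀ : ∀ t ∈ Ioc 0 1, |g t| ≤ C) (hg₁ : ∀ t ∈ Ioi 1, |g t| ≤ C * t ^ β) :
    IntegrableOn (fun t => g t * f t) (Ioi 0) := by
  rw [← Ioc_union_Ioi_eq_Ioi zero_le_one]
  refine IntegrableOn.union ?_ ?_
  · refine Integrable.mono ((hf.mono_set Ioc_subset_Ioi_self).const_mul C)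
      (hg.aestronglyMeasurable.mul (hf.mono_set Ioc_subset_Ioi_self).1) ?_
    filter_upwards [ae_restrict_mem measurableSet_Ioc] with t ht
    rw [norm_mul, norm_mul, Real.norm_eq_abs, Real.norm_eq_abs, Real.norm_eq_abs]
    exact mul_le_mul_of_nonneg_right ((hg₀ t ht).trans (le_abs_self C)) (abs_nonneg _)
  · refine Integrable.mono (hfβ.const_mul C) (hg.aestronglyMeasurable.mul
      (hf.mono_set (Ioi_subset_Ioi zero_le_one)).1) ?_
    filter_upwards [ae_restrict_mem measurableSet_Ioi] with t ht
    have ht0 : (0 : ℝ) < t := zero_lt_one.trans ht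
    rw [norm_mul, norm_mul, norm_mul, Real.norm_eq_abs, Real.norm_eq_abs, Real.norm_eq_abs,
      Real.norm_eq_abs, abs_of_pos (rpow_pos_of_pos ht0 β), ← mul_assoc]
    exact mul_le_mul_of_nonneg_right ((hg₁ t ht).trans
      (mul_le_mul_of_nonneg_right (le_abs_self C) (rpow_nonneg ht0.le β))) (abs_nonneg _)

lemma integrableOn_Ioi_rpow_mul {f : ℝ → ℝ} {β c : ℝ} (hf : IntegrableOn f (Ioi 0))
    (hfβ : IntegrableOn (fun t => t ^ β * f t) (Ioi 1)) (hc : 0 ≤ c) (hcβ : c ≤ β) :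
    IntegrableOn (fun t => t ^ c * f t) (Ioi 0) := by
  refine integrableOn_Ioi_mul_of_abs_le (C := 1) hf hfβ (by fun_prop) (fun t ht => ?_)
    fun t ht => ?_
  · rw [abs_of_nonneg (rpow_nonneg ht.1.le c)]
    exact rpow_le_one ht.1.le ht.2 hc
  · rw [abs_of_nonneg (rpow_nonneg (zero_le_one.trans ht.le) c), one_mul]
    exact rpow_le_rpow_of_exponent_le ht.le hcβ

lemma integrableOn_Ioi_log_mul_rpow_mul {f : ℝ → ℝ} {β c : ℝ} (hf : IntegrableOn f (Ioi 0))
    (hfβ : IntegrableOn (fun t => t ^ β * f t) (Ioi 1)) (hc : 0 < c) (hcβ : c < β) :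
    IntegrableOn (fun t => log t * (t ^ c * f t)) (Ioi 0) := by
  simp_rw [← mul_assoc]
  refine integrableOn_Ioi_mul_of_abs_le (C := c⁻¹ + (β - c)⁻¹) hf hfβ (by fun_prop)
    (fun t ht => ?_) fun t ht => ?_
  · have h := abs_log_mul_self_rpow_lt t c ht.1 ht.2 hc
    rw [one_div] at h
    linarith [inv_pos.2 (sub_pos.2 hcβ)]
  · have ht0 : 0 < t := zero_lt_one.trans ht
    have hβc : 0 < β - c := sub_pos.2 hcβ
    have hlog := log_le_rpow_div ht0.le hβc
    rw [abs_of_nonneg (mul_nonneg (log_nonneg ht.le) (rpow_nonneg ht0.le c))]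
    calc log t * t ^ c ≤ t ^ (β - c) / (β - c) * t ^ c :=
          mul_le_mul_of_nonneg_right hlog (rpow_nonneg ht0.le c)
      _ = (β - c)⁻¹ * t ^ β := by rw [div_eq_inv_mul, mul_assoc, ← rpow_add ht0, sub_add_cancel]
      _ ≤ (c⁻¹ + (β - c)⁻¹) * t ^ β := mul_le_mul_of_nonneg_right
          (le_add_of_nonneg_left (inv_nonneg.2 hc.le)) (rpow_nonneg ht0.le β)

theorem inv_mul_integral_Ioo_sq_sub_sq_pow_mul_eq_sum (m : ℕ) {φ : ℝ → ℝ}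
    (hint : ∀ i ≤ m, IntegrableOn (fun t => t ^ (2 * i) * φ t) (Ioi 0))
    (hmom : ∀ i ≤ m, ∫ t in Ioi 0, t ^ (2 * i) * φ t = 0) {s : ℝ} (hs : 0 ≤ s) :
    s⁻¹ * ∫ t in Ioo 0 s, (s ^ 2 - t ^ 2) ^ m * φ t =
      ∑ j ∈ Finset.range (m + 1), -((-1) ^ (j + m) * m.choose j) *
        (s⁻¹ * (s ^ 2) ^ j * ∫ t in Ioi s, t ^ (2 * (m - j)) * φ t) := by
  have hexpand : ∀ t, (s ^ 2 - t ^ 2) ^ m * φ t = ∑ j ∈ Finset.range (m + 1),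
      (-1) ^ (j + m) * m.choose j * (s ^ 2) ^ j * (t ^ (2 * (m - j)) * φ t) := fun t => by
    simp_rw [sub_pow, Finset.sum_mul, pow_mul]
    exact Finset.sum_congr rfl fun j _ => by ring
  simp_rw [hexpand]
  rw [integral_finsetSum _ fun j _ => ((hint _ (Nat.sub_le m j)).mono_set
    Ioo_subset_Ioi_self).const_mul _, Finset.mul_sum]
  refine Finset.sum_congr rfl fun j _ => ?_
  rw [integral_const_mul, integral_Ioo_eq_neg_integral_Ioi (hint _ (Nat.sub_le m j))
    (hmom _ (Nat.sub_le m j)) hs]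
  ring

theorem integral_inv_mul_integral_sq_sub_sq_pow_mul (m : ℕ) {φ : ℝ → ℝ}
    (hint : ∀ i ≤ m, IntegrableOn (fun t => t ^ (2 * i) * φ t) (Ioi 0))
    (hmom : ∀ i ≤ m, ∫ t in Ioi 0, t ^ (2 * i) * φ t = 0)
    (hlog : IntegrableOn (fun t => log t * (t ^ (2 * m) * φ t)) (Ioi 0)) :
    IntegrableOn (fun s => s⁻¹ * ∫ t in Ioo 0 s, (s ^ 2 - t ^ 2) ^ m * φ t) (Ioi 0) ∧
      ∫ s in Ioi 0, s⁻¹ * ∫ t in Ioo 0 s, (s ^ 2 - t ^ 2) ^ m * φ t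
        = (-1) ^ (m + 1) * ∫ t in Ioi 0, log t * (t ^ (2 * m) * φ t) := by
  set χ : ℕ → ℝ → ℝ := fun i t => t ^ (2 * i) * φ t with hχ
  set f : ℕ → ℝ → ℝ := fun j s => s⁻¹ * (s ^ 2) ^ j * ∫ t in Ioi s, χ (m - j) t with hf
  set c : ℕ → ℝ := fun j => -((-1) ^ (j + m) * m.choose j) with hc
  have hexpand : ∀ s ∈ Ioi (0 : ℝ), s⁻¹ * ∫ t in Ioo 0 s, (s ^ 2 - t ^ 2) ^ m * φ t =
      ∑ j ∈ Finset.range (m + 1), c j * f j s :=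
    fun s hs => inv_mul_integral_Ioo_sq_sub_sq_pow_mul_eq_sum m hint hmom (le_of_lt hs)
  have hf_zero : IntegrableOn (f 0) (Ioi 0) ∧
      ∫ s in Ioi 0, f 0 s = ∫ t in Ioi 0, log t * χ m t := by
    simpa [hf] using integral_inv_mul_integral_Ioi_eq_integral_log_mul (hint m le_rfl) hlog
      (hmom m le_rfl)
  have hf_succ : ∀ j < m, IntegrableOn (f (j + 1)) (Ioi 0) ∧ ∫ s in Ioi 0, f (j + 1) s = 0 := by
    intro j hj
    have hχ_shift : (fun t => t ^ (2 * j + 1 + 1) * χ (m - (j + 1)) t) = χ m := by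
      ext t
      rw [hχ, ← mul_assoc, ← pow_add]
      congr 2
      omega
    have hf_pow : ∀ s ∈ Ioi (0 : ℝ),
        s ^ (2 * j + 1) * ∫ t in Ioi s, χ (m - (j + 1)) t = f (j + 1) s :=
      fun s hs => by
        have hpow : s ^ (2 * j + 1) = s⁻¹ * (s ^ 2) ^ (j + 1) := by
          field_simp [(mem_Ioi.1 hs).ne']
          ring
        rw [hpow]
    obtain ⟨hint', heq⟩ := integral_pow_mul_integral_Ioi (2 * j + 1)
      (hint _ (Nat.sub_le _ _)).aestronglyMeasurable (by rw [hχ_shift]; exact hint m le_rfl)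
    refine ⟨IntegrableOn.congr_fun hint' hf_pow measurableSet_Ioi, ?_⟩
    rw [← setIntegral_congr_fun measurableSet_Ioi hf_pow, heq, hχ_shift, hmom m le_rfl, mul_zero]
  have hf_int : ∀ j ∈ Finset.range (m + 1), IntegrableOn (fun s => c j * f j s) (Ioi 0) := by
    intro j hj
    rcases j with _ | j
    · exact hf_zero.1.const_mul _
    · exact (hf_succ j (by simpa using hj)).1.const_mul _
  refine ⟨IntegrableOn.congr_fun (integrable_finsetSum _ hf_int) (fun s hs => (hexpand s hs).symm)
    measurableSet_Ioi, ?_⟩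
  rw [setIntegral_congr_fun measurableSet_Ioi hexpand, integral_finsetSum _ hf_int,
    Finset.sum_range_succ']
  simp only [integral_const_mul, hf_zero.2]
  rw [Finset.sum_eq_zero fun j hj => by rw [(hf_succ j (Finset.mem_range.1 hj)).2, mul_zero]]
  simp only [hc, hχ, Nat.choose_zero_right, Nat.cast_one]
  ring

theorem integral_inv_mul_integral_sq_sub_sq_pow_mul_of_rpow_mul {m : ℕ} (hm : 1 ≤ m)
    {φ : ℝ → ℝ} {β : ℝ} (hβ : 2 * m < β) (hφ : IntegrableOn φ (Ioi 0))
    (hφβ : IntegrableOn (fun t => t ^ β * φ t) (Ioi 1))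
    (hmom : ∀ i ≤ m, ∫ t in Ioi 0, t ^ (2 * i) * φ t = 0) :
    IntegrableOn (fun s => s⁻¹ * ∫ t in Ioo 0 s, (s ^ 2 - t ^ 2) ^ m * φ t) (Ioi 0) ∧
      ∫ s in Ioi 0, s⁻¹ * ∫ t in Ioo 0 s, (s ^ 2 - t ^ 2) ^ m * φ t
        = (-1) ^ (m + 1) * ∫ t in Ioi 0, log t * (t ^ (2 * m) * φ t) := by
  refine integral_inv_mul_integral_sq_sub_sq_pow_mul m (fun i hi => ?_) hmom ?_
  · have h2i : ((2 * i : ℕ) : ℝ) ≤ β := by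
      push_cast
      linarith [(by exact_mod_cast hi : (i : ℝ) ≤ m)]
    simpa only [rpow_natCast] using integrableOn_Ioi_rpow_mul hφ hφβ (Nat.cast_nonneg _) h2i
  · have h2m : (0 : ℝ) < (2 * m : ℕ) := by exact_mod_cast (by omega : 0 < 2 * m)
    simpa only [rpow_natCast] using
      integrableOn_Ioi_log_mul_rpow_mul hφ hφβ h2m (by push_cast; exact hβ)

lemma setIntegral_Ioo_sq (f : ℝ → ℝ) {s : ℝ} (hs : 0 ≤ s) :
    ∫ r in Ioo 0 (s ^ 2), f r = ∫ t in Ioo 0 s, 2 * t * f (t ^ 2) := by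
  have h := intervalIntegral.integral_comp_mul_deriv_of_deriv_nonneg (g := f) (a := 0) (b := s)
    (f := fun t => t ^ 2) (f' := fun t => 2 * t) (continuous_pow 2).continuousOn
    (fun t _ => by simpa using hasDerivAt_pow 2 t) (fun t ht => by
      rw [min_eq_left hs] at ht
      linarith [ht.1])
  rw [zero_pow two_ne_zero, intervalIntegral.integral_of_le hs,
    intervalIntegral.integral_of_le (sq_nonneg s)] at h
  rw [← integral_Ioc_eq_integral_Ioo, ← h, integral_Ioc_eq_integral_Ioo]
  exact setIntegral_congr_fun measurableSet_Ioo fun t _ => by simp only [Function.comp_apply]; ring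

lemma integral_Ioo_sq_sub_rpow_mul_weight (m p : ℕ) (w : ℝ → ℝ) {s : ℝ} (hs : 0 ≤ s) :
    ∫ r in Ioo 0 (s ^ 2), (s ^ 2 - r) ^ (m : ℝ) * (r ^ (((p : ℝ) - 1) / 2) * w (√r)) =
      2 * ∫ t in Ioo 0 s, (s ^ 2 - t ^ 2) ^ m * (t ^ p * w t) := by
  rw [setIntegral_Ioo_sq _ hs, ← integral_const_mul]
  refine setIntegral_congr_fun measurableSet_Ioo fun t ht => ?_
  have ht0 : 0 < t := ht.1
  have hpow : t * (t ^ 2) ^ (((p : ℝ) - 1) / 2) = t ^ p := by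
    rw [← rpow_natCast t 2, ← rpow_mul ht0.le, ← rpow_natCast t p]
    nth_rewrite 1 [← rpow_one t]
    rw [← rpow_add ht0]
    congr 1
    push_cast
    ring
  rw [rpow_natCast, sqrt_sq ht0.le, ← hpow]
  ring

lemma integrableOn_rpow_mul_pow_mul {w : ℝ → ℝ} (hw : Measurable w) (x : ℝ) (p : ℕ) {S : Set ℝ}
    (hS : S ⊆ Ioi 0) (hSm : MeasurableSet S)
    (h : IntegrableOn (fun t => t ^ (x + p) * |w t|) S) :
    IntegrableOn (fun t => t ^ x * (t ^ p * w t)) S := by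
  refine (integrable_norm_iff (by fun_prop)).1 (IntegrableOn.congr_fun h (fun t ht => ?_) hSm)
  have ht0 : 0 < t := hS ht
  rw [rpow_add ht0, rpow_natCast, norm_mul, norm_mul, norm_pow, Real.norm_eq_abs, Real.norm_eq_abs,
    Real.norm_eq_abs, abs_of_pos (rpow_pos_of_pos ht0 x), abs_of_pos ht0, mul_assoc]

theorem stmt_16 (n k : ℕ) (hk : 1 ≤ k) (hkn : k < n) (heven : Even k)
    (w : ℝ → ℝ) (hw : Measurable w)
    (hI0 : IntegrableOn (fun s => s ^ ((n : ℝ) - k - 1) * |w s|) (Set.Ioi 0))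
    (β : ℝ) (hβ : (k : ℝ) < β)
    (hIβ : IntegrableOn (fun s => s ^ (β + (n : ℝ) - k - 1) * |w s|) (Set.Ioi 1))
    (hmom : ∀ j : ℕ, 2 * j ≤ k →
      ∫ s in Set.Ioi 0, s ^ (2 * (j : ℝ) + n - k - 1) * w s = 0)
    (wt lam : ℝ → ℝ)
    (hwt : ∀ s : ℝ, wt s = s ^ (((n : ℝ) - k) / 2 - 1) * w (Real.sqrt s))
    (hlam : ∀ s : ℝ, 0 < s → lam s =
      1 / (s * Real.Gamma ((k : ℝ) / 2 + 1)) *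
        ∫ r in Set.Ioo 0 (s ^ 2), (s ^ 2 - r) ^ ((k : ℝ) / 2) * wt r) :
    IntegrableOn lam (Set.Ioi 0) ∧
    ∫ s in Set.Ioi 0, lam s
      = (2 * (-1 : ℝ) ^ (1 + k / 2) / (Nat.factorial (k / 2) : ℝ)) *
          ∫ s in Set.Ioi 0, s ^ ((n : ℝ) - 1) * w s * Real.log s := by
  obtain ⟨m, hkm⟩ := heven
  obtain ⟨p, hnp⟩ : ∃ p, n = k + p + 1 := ⟨n - k - 1, by omega⟩
  have hkR : (k : ℝ) = 2 * m := by rw [hkm]; push_cast; ring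
  have hexp : ∀ x : ℝ, x + n - k - 1 = x + p := fun x => by rw [hnp]; push_cast; ring
  have hφ : IntegrableOn (fun t => t ^ p * w t) (Ioi 0) := by
    have hp : (n : ℝ) - k - 1 = 0 + p := by rw [← hexp]; ring
    simpa using integrableOn_rpow_mul_pow_mul hw 0 p subset_rfl measurableSet_Ioi (hp ▸ hI0)
  have hφβ := integrableOn_rpow_mul_pow_mul hw β p (Ioi_subset_Ioi zero_le_one) measurableSet_Ioi
    (by simpa only [hexp] using hIβ)
  have hmom' : ∀ i ≤ m, ∫ t in Ioi 0, t ^ (2 * i) * (t ^ p * w t) = 0 := fun i hi => by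
    refine (setIntegral_congr_fun measurableSet_Ioi fun t ht => ?_).trans (hmom i (by omega))
    rw [hexp, rpow_add ht, rpow_natCast, mul_assoc]
    norm_cast
  have hlam' : ∀ s ∈ Ioi (0 : ℝ), lam s =
      2 / m.factorial * (s⁻¹ * ∫ t in Ioo 0 s, (s ^ 2 - t ^ 2) ^ m * (t ^ p * w t)) := by
    intro s hs
    have hwexp : ((n : ℝ) - k) / 2 - 1 = ((p : ℝ) - 1) / 2 := by rw [hnp]; push_cast; ring
    simp_rw [hlam s hs, hwt, hwexp, hkR, mul_div_cancel_left₀ (m : ℝ) two_ne_zero,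
      Gamma_nat_eq_factorial]
    rw [integral_Ioo_sq_sub_rpow_mul_weight m p w (le_of_lt hs), one_div, mul_inv]
    ring
  obtain ⟨hΛ_int, hΛ⟩ := integral_inv_mul_integral_sq_sub_sq_pow_mul_of_rpow_mul (by omega)
    (hkR ▸ hβ) hφ hφβ hmom'
  refine ⟨IntegrableOn.congr_fun (hΛ_int.const_mul _) (fun s hs => (hlam' s hs).symm)
    measurableSet_Ioi, ?_⟩
  rw [setIntegral_congr_fun measurableSet_Ioi hlam', integral_const_mul, hΛ,
    show k / 2 = m by omega, ← mul_assoc]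
  congr 1
  · ring
  refine setIntegral_congr_fun measurableSet_Ioi fun t ht => ?_
  rw [show (n : ℝ) - 1 = k + n - k - 1 by ring, hexp, rpow_add ht, hkR, rpow_natCast]
  norm_cast
  ring
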